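/- For all n ≥ 1, the word φⁿ(2) avoids 7/4⁺-powers: every factor of φⁿ(2) with least period p and length ℓ satisfies ℓ/p ≤ 7/4. -/

import Mathlib

/-- Letters: `0,1,2` represent `1,2,3`. `sigmaM` exchanges letters 1 and 2. -/
def sigmaM : Fin 3 → Fin 3
  | 0 => 1
  | 1 => 0
  | 2 => 2

/-- `rhoM` exchanges letters 2 and 3. -/
def rhoM : Fin 3 → Fin 3
  | 0 => 0
  | 1 => 2
  | 2 => 1

/-- `phi a = σ(a) · a · ρ(a)`. -/
def phi (a : List (Fin 3)) : List (Fin 3) := a.map sigmaM ++ a ++ a.map rhoM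

/-- Kurosaki word `φⁿ(2)` (the letter 2 is encoded as `1 : Fin 3`). -/
def K (n : ℕ) : List (Fin 3) := phi^[n] [1]

/-- `w` has period `p`. -/
def HasPeriod (w : List (Fin 3)) (p : ℕ) : Prop :=
  0 < p ∧ ∀ i, i + p < w.length → w[i]! = w[i + p]!

def IsLeastPeriod (w : List (Fin 3)) (p : ℕ) : Prop :=
  HasPeriod w p ∧ ∀ q, HasPeriod w q → p ≤ q

/-- every factor has exponent at most 7/4. -/
def Avoids74 (w : List (Fin 3)) : Prop :=
  ∀ x p, x <:+: w → x ≠ [] → IsLeastPeriod x p → 4 * x.length ≤ 7 * p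

/-- `w` contains no nonempty factor of the form `x ++ x`. -/
def SqFree (w : List (Fin 3)) : Prop :=
  ∀ x : List (Fin 3), x ≠ [] → ¬ (x ++ x) <:+: w

/-- the triple of `w` at positions `3k, 3k+1, 3k+2` is a permutation of `123`. -/
def TripleDistinct (w : List (Fin 3)) : Prop :=
  ∀ k, 3 * k + 2 < w.length →
    w[3 * k]! ≠ w[3 * k + 1]! ∧ w[3 * k]! ≠ w[3 * k + 2]! ∧ w[3 * k + 1]! ≠ w[3 * k + 2]!

/-!
Cut `φⁿ⁺¹(2)` into blocks of three letters: every block is a permutation of `123`, and naming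
the six permutations by letters gives `φⁿ⁺¹(2) = τ(μⁿ(0))` for a 3-uniform morphism `μ` on six
letters and a 3-uniform coding `τ`. A 3-uniform image of a word avoiding 7/4⁺-powers avoids them
too as long as the morphism is synchronizing: a repetition whose period is a multiple of 3 pulls
back to a repetition of the preimage of at least the same exponent, a long repetition of another
period would exhibit a factor at two different phases mod 3, and the short ones are finitely
many. For `μ` and `τ` all of this is a finite computation on the factors of length 7 of the
words `μⁿ(0)`, a set closed under `μ`; induction on `n` then gives the theorem.
-/

open List

variable {α β : Type*}

section Uniform

def bind3 (c : α → Fin 3 → β) (v : List α) : List β :=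
  v.flatMap fun a => List.ofFn (c a)

variable (c : α → Fin 3 → β)

@[simp] lemma bind3_nil : bind3 c [] = [] := rfl

@[simp] lemma bind3_cons (a : α) (v : List α) :
    bind3 c (a :: v) = c a 0 :: c a 1 :: c a 2 :: bind3 c v := rfl

lemma bind3_append (v w : List α) : bind3 c (v ++ w) = bind3 c v ++ bind3 c w := by
  simp [bind3]

@[simp] lemma length_bind3 (v : List α) : (bind3 c v).length = 3 * v.length := by
  simp [bind3, Nat.mul_comm]

lemma drop_bind3 (v : List α) (k : ℕ) : (bind3 c v).drop (3 * k) = bind3 c (v.drop k) := by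
  induction v generalizing k with
  | nil => simp
  | cons a v ih => cases k <;> simp [Nat.mul_succ, ih]

lemma take_bind3 (v : List α) (m : ℕ) : (bind3 c v).take (3 * m) = bind3 c (v.take m) := by
  induction v generalizing m with
  | nil => simp
  | cons a v ih => cases m <;> simp [Nat.mul_succ, ih]

lemma getElem!_bind3 [Inhabited α] [Inhabited β] (v : List α) {k : ℕ} (hk : k < v.length)
    (j : Fin 3) : (bind3 c v)[3 * k + j]! = c v[k]! j := by
  induction v generalizing k with
  | nil => simp at hk
  | cons a v ih =>
    rcases k with _ | k
    · fin_cases j <;> rfl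
    · rw [show 3 * (k + 1) + j = 3 * k + j + 1 + 1 + 1 by ring]
      simpa using ih (by simpa using hk)

lemma take_drop_bind3 (v : List α) (k j L m : ℕ) (h : j + L ≤ 3 * m) :
    ((bind3 c v).drop (3 * k + j)).take L = ((bind3 c ((v.drop k).take m)).drop j).take L := by
  rw [← drop_drop, drop_bind3, ← take_bind3, drop_take, take_take, min_eq_left (by omega)]

lemma bind3_map {α' β' : Type*} (f : α → α') (g : β → β') (c' : α' → Fin 3 → β')
    (h : ∀ a j, c' (f a) j = g (c a j)) (v : List α) :
    bind3 c' (v.map f) = (bind3 c v).map g := by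
  induction v with
  | nil => rfl
  | cons a v ih => simp [ih, h]

end Uniform

section Periodic

variable [Inhabited α]

def PeriodicOn (w : List α) (s ℓ p : ℕ) : Prop :=
  ∀ i, s ≤ i → i + p < s + ℓ → w[i]! = w[i + p]!

def Avoids74' (w : List α) : Prop :=
  ∀ s ℓ p, 0 < p → s + ℓ ≤ w.length → PeriodicOn w s ℓ p → 4 * ℓ ≤ 7 * p

lemma PeriodicOn.take_drop_eq {w : List α} {s ℓ p L : ℕ} (h : PeriodicOn w s ℓ p)
    (hL : L + p ≤ ℓ) (hw : s + ℓ ≤ w.length) :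
    (w.drop s).take L = (w.drop (s + p)).take L := by
  refine List.ext_getElem (by simp; omega) fun d hd _ => ?_
  simp only [length_take, length_drop] at hd
  have := h (s + d) (by omega) (by omega)
  rw [show s + d + p = s + p + d by ring, getElem!_pos w _ (by omega),
    getElem!_pos w _ (by omega)] at this
  simpa using this

end Periodic

section Transfer

variable [Inhabited α] [Inhabited β] {c : α → Fin 3 → β} {v : List α}

lemma PeriodicOn.bind3_block {s ℓ q k j : ℕ} (h : PeriodicOn (bind3 c v) s ℓ (3 * q))
    (hlen : s + ℓ ≤ 3 * v.length) (hj : j < 3) (hs : s ≤ 3 * k + j)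
    (he : 3 * k + j + 3 * q < s + ℓ) : c v[k]! ⟨j, hj⟩ = c v[k + q]! ⟨j, hj⟩ := by
  have := h (3 * k + j) hs he
  rwa [show 3 * k + j + 3 * q = 3 * (k + q) + j by ring,
    getElem!_bind3 c v (k := k) (by omega) ⟨j, hj⟩,
    getElem!_bind3 c v (k := k + q) (by omega) ⟨j, hj⟩] at this

/-- `hleft` and `hright` recover a block of which the repetition meets only the last, resp. first,
letter. -/
theorem PeriodicOn.of_bind3 {R : α → α → Prop} {s ℓ q : ℕ} (hR : v.IsChain R)
    (h01 : ∀ a b, c a 0 = c b 0 → c a 1 = c b 1 → a = b)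
    (h12 : ∀ a b, c a 1 = c b 1 → c a 2 = c b 2 → a = b)
    (hleft : ∀ x x' y, R x y → R x' y → c x 2 = c x' 2 → x = x')
    (hright : ∀ x y y', R x y → R x y' → c y 0 = c y' 0 → y = y')
    (h : PeriodicOn (bind3 c v) s ℓ (3 * q)) (hlen : s + ℓ ≤ 3 * v.length)
    (hℓ : 3 * q + 3 ≤ ℓ) :
    PeriodicOn v (s / 3) ((s + ℓ - 1) / 3 + 1 - s / 3) q := by
  have adj : ∀ k, k + 1 < v.length → R v[k]! v[k + 1]! := fun k hk => by
    rw [getElem!_pos v k (by omega), getElem!_pos v (k + 1) hk]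
    exact hR.getElem k hk
  have twoLetters : ∀ k j, j < 2 → s ≤ 3 * k + j → 3 * k + j + 1 + 3 * q < s + ℓ →
      v[k]! = v[k + q]! := by
    intro k j hj hs he
    rcases (show j = 0 ∨ j = 1 by omega) with rfl | rfl
    · exact h01 _ _ (h.bind3_block hlen (j := 0) (by omega) hs (by omega))
        (h.bind3_block hlen (j := 1) (by omega) (by omega) he)
    · exact h12 _ _ (h.bind3_block hlen (j := 1) (by omega) hs (by omega))
        (h.bind3_block hlen (j := 2) (by omega) (by omega) he)
  intro k hk hkq
  by_cases hA : s ≤ 3 * k ∧ 3 * k + 1 + 3 * q < s + ℓ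
  · exact twoLetters k 0 (by omega) hA.1 hA.2
  by_cases hB : s ≤ 3 * k + 1 ∧ 3 * k + 2 + 3 * q < s + ℓ
  · exact twoLetters k 1 (by omega) hB.1 hB.2
  by_cases hC : s = 3 * k + 2
  · have hnext := twoLetters (k + 1) 0 (by omega) (by omega) (by omega)
    have hR' := adj (k + q) (by omega)
    rw [show k + q + 1 = k + 1 + q by ring, ← hnext] at hR'
    exact hleft _ _ _ (adj k (by omega)) hR'
      (h.bind3_block hlen (j := 2) (by omega) (by omega) (by omega))
  · obtain ⟨k, rfl⟩ : ∃ k', k = k' + 1 := ⟨k - 1, by omega⟩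
    have hprev := twoLetters k 1 (by omega) (by omega) (by omega)
    have hR' := adj (k + q) (by omega)
    rw [← hprev, show k + q + 1 = k + 1 + q by ring] at hR'
    exact hright _ _ _ (adj k (by omega)) hR'
      (h.bind3_block hlen (j := 0) (by omega) (by omega) (by omega))

theorem Avoids74'.bind3 {R : α → α → Prop} {D : ℕ} (hv : Avoids74' v) (hR : v.IsChain R)
    (h01 : ∀ a b, c a 0 = c b 0 → c a 1 = c b 1 → a = b)
    (h12 : ∀ a b, c a 1 = c b 1 → c a 2 = c b 2 → a = b)
    (hleft : ∀ x x' y, R x y → R x' y → c x 2 = c x' 2 → x = x')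
    (hright : ∀ x y y', R x y → R x y' → c y 0 = c y' 0 → y = y')
    (hsync : ∀ i i', i + D ≤ 3 * v.length → i' + D ≤ 3 * v.length →
      ((bind3 c v).drop i).take D = ((bind3 c v).drop i').take D → i % 3 = i' % 3)
    (hshort : ∀ s ℓ p, p % 3 ≠ 0 → ℓ < p + D → s + ℓ ≤ 3 * v.length →
      PeriodicOn (bind3 c v) s ℓ p → 4 * ℓ ≤ 7 * p) :
    Avoids74' (bind3 c v) := by
  intro s ℓ p hp hlen hP
  rw [length_bind3] at hlen
  by_contra hbig
  by_cases hp3 : p % 3 = 0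
  · obtain ⟨q, rfl⟩ : ∃ q, p = 3 * q := ⟨p / 3, by omega⟩
    have := hv _ _ q (by omega) (by omega) (hP.of_bind3 hR h01 h12 hleft hright hlen (by omega))
    omega
  by_cases hD : D + p ≤ ℓ
  · have := hsync s (s + p) (by omega) (by omega) (hP.take_drop_eq hD (by simpa using hlen))
    omega
  · exact hbig (hshort s ℓ p hp3 (by omega) hlen hP)

end Transfer

section Windows

def WindowsIn (S : List (List α)) (v : List α) : Prop :=
  ∀ k, (v.drop k).take 7 ∈ S

def Adjacent (S : List (List α)) (a b : α) : Prop :=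
  ∃ f ∈ S, [a, b] <:+: f

variable {S : List (List α)} {v : List α}

lemma WindowsIn.isChain (h : WindowsIn S v) : v.IsChain (Adjacent S) := by
  refine isChain_iff_getElem.2 fun k hk => ⟨_, h k, IsPrefix.isInfix ?_⟩
  rw [drop_eq_getElem_cons (by omega), drop_eq_getElem_cons hk]
  exact ⟨_, rfl⟩

lemma WindowsIn.bind3 {c : α → Fin 3 → α}
    (hS : ∀ f ∈ S, ∀ j < 3, ((bind3 c (f.take 3)).drop j).take 7 ∈ S) (h : WindowsIn S v) :
    WindowsIn S (bind3 c v) := by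
  intro i
  rw [← Nat.div_add_mod i 3, take_drop_bind3 c v _ _ _ 3 (by omega)]
  simpa [take_take] using hS _ (h (i / 3)) (i % 3) (Nat.mod_lt _ (by norm_num))

section ShortRepetitions

variable (c : α → Fin 3 → β)

/-- `(7 * p + 4) / 4` is the shortest length of a repetition of period `p` with exponent above
`7/4`, and it is less than `p + D` exactly when `p < (4 * D - 2) / 3`. -/
def ShortRepetitionFree (S : List (List α)) (D : ℕ) : Prop :=
  ∀ p < (4 * D - 2) / 3, p % 3 ≠ 0 → ∀ f ∈ S, ∀ r < 3, r + (7 * p + 4) / 4 ≤ 3 * f.length →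
    ((bind3 c f).drop r).take ((7 * p + 4) / 4 - p) ≠
      ((bind3 c f).drop (r + p)).take ((7 * p + 4) / 4 - p)

variable {c}

lemma ShortRepetitionFree.le [Inhabited β] {D : ℕ} (hS : ShortRepetitionFree c S D)
    (hD : D ≤ 9) (hv : WindowsIn S v) {s ℓ p : ℕ} (hp : p % 3 ≠ 0) (hℓ : ℓ < p + D)
    (hlen : s + ℓ ≤ 3 * v.length) (hP : PeriodicOn (bind3 c v) s ℓ p) : 4 * ℓ ≤ 7 * p := by
  by_contra hbig
  have heq := hP.take_drop_eq (L := (7 * p + 4) / 4 - p) (by omega) (by simpa using hlen)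
  rw [← Nat.div_add_mod s 3, add_assoc, take_drop_bind3 c v _ _ _ 7 (by omega),
    take_drop_bind3 c v _ _ _ 7 (by omega)] at heq
  exact hS p (by omega) hp _ (hv _) _ (Nat.mod_lt _ (by norm_num)) (by simp; omega) heq

end ShortRepetitions

variable [DecidableEq α] (c : α → Fin 3 → β)

/-- No factor of length `D` of the image of a window occurs in two different phases mod 3. -/
def Synchronizing (S : List (List α)) (m D : ℕ) : Prop :=
  ∀ f ∈ (S.map (·.take m)).dedup, ∀ g ∈ (S.map (·.take m)).dedup, ∀ r < 3, ∀ r' < 3, r ≠ r' →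
    r + D ≤ 3 * f.length → r' + D ≤ 3 * g.length →
    ((bind3 c f).drop r).take D ≠ ((bind3 c g).drop r').take D

variable {c}

lemma Synchronizing.mod_eq {m D : ℕ} (hS : Synchronizing c S m D) (hm : D + 2 ≤ 3 * m)
    (hm7 : m ≤ 7) (hv : WindowsIn S v) {i i' : ℕ} (hi : i + D ≤ 3 * v.length)
    (hi' : i' + D ≤ 3 * v.length)
    (heq : ((bind3 c v).drop i).take D = ((bind3 c v).drop i').take D) : i % 3 = i' % 3 := by
  have window : ∀ k, (v.drop k).take m ∈ (S.map (·.take m)).dedup := fun k =>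
    mem_dedup.2 (mem_map.2 ⟨_, hv k, by simp [take_take, hm7]⟩)
  by_contra hne
  rw [← Nat.div_add_mod i 3, ← Nat.div_add_mod i' 3, take_drop_bind3 c v _ _ _ m (by omega),
    take_drop_bind3 c v _ _ _ m (by omega)] at heq
  exact hS _ (window _) _ (window _) _ (Nat.mod_lt _ (by norm_num)) _
    (Nat.mod_lt _ (by norm_num)) hne (by simp; omega) (by simp; omega) heq

end Windows

/-- Letter `a` stands for the block `tau a`, the `a`-th permutation of `012` in lexicographic
order; `sigma6` and `rho6` are `sigmaM` and `rhoM` acting on these blocks. -/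
def tau : Fin 6 → Fin 3 → Fin 3 :=
  ![![0, 1, 2], ![0, 2, 1], ![1, 0, 2], ![1, 2, 0], ![2, 0, 1], ![2, 1, 0]]

def sigma6 : Fin 6 → Fin 6 := ![2, 3, 0, 1, 5, 4]

def rho6 : Fin 6 → Fin 6 := ![1, 0, 4, 5, 2, 3]

/-- The morphism commuting with `sigma6` and `rho6` with `mu 0 = sigma6 0 · 0 · rho6 0`, so that
its iterates on `0` follow the recursion of `phi`. -/
def mu : Fin 6 → Fin 3 → Fin 6 :=
  ![![2, 0, 1], ![4, 1, 0], ![0, 2, 3], ![5, 3, 2], ![1, 4, 5], ![3, 5, 4]]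

def muIter (n : ℕ) : List (Fin 6) := (bind3 mu)^[n] [0]

/-- The windows of length 7 of the words `muIter n`, shorter ones at their ends included. -/
def muWindows : List (List (Fin 6)) :=
  [[], [0], [1], [0, 1], [1, 0], [2, 0, 1], [4, 1, 0], [0, 2, 0, 1], [1, 4, 1, 0], [0, 1, 4, 1, 0],
   [1, 0, 2, 0, 1], [2, 0, 1, 4, 1, 0], [4, 1, 0, 2, 0, 1], [0, 1, 0, 2, 3, 2, 0],
   [0, 1, 0, 2, 3, 5, 3], [0, 1, 4, 1, 0, 1, 4], [0, 1, 4, 1, 0, 2, 0], [0, 1, 4, 5, 3, 5, 4],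
   [0, 1, 4, 5, 4, 1, 0], [0, 2, 0, 1, 0, 2, 3], [0, 2, 0, 1, 4, 1, 0], [0, 2, 3, 2, 0, 1, 0],
   [0, 2, 3, 2, 0, 1, 4], [0, 2, 3, 5, 3, 2, 0], [0, 2, 3, 5, 3, 2, 3], [1, 0, 1, 4, 5, 3, 5],
   [1, 0, 1, 4, 5, 4, 1], [1, 0, 2, 0, 1, 0, 2], [1, 0, 2, 0, 1, 4, 1], [1, 0, 2, 3, 2, 0, 1],
   [1, 0, 2, 3, 5, 3, 2], [1, 4, 1, 0, 1, 4, 5], [1, 4, 1, 0, 2, 0, 1], [1, 4, 5, 3, 5, 4, 1],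
   [1, 4, 5, 3, 5, 4, 5], [1, 4, 5, 4, 1, 0, 1], [1, 4, 5, 4, 1, 0, 2], [2, 0, 1, 0, 2, 3, 2],
   [2, 0, 1, 0, 2, 3, 5], [2, 0, 1, 4, 1, 0, 1], [2, 0, 1, 4, 1, 0, 2], [2, 0, 2, 3, 2, 0, 1],
   [2, 0, 2, 3, 5, 3, 2], [2, 3, 2, 0, 1, 0, 2], [2, 3, 2, 0, 1, 4, 1], [2, 3, 5, 3, 2, 0, 2],
   [2, 3, 5, 3, 2, 3, 5], [2, 3, 5, 4, 1, 4, 5], [2, 3, 5, 4, 5, 3, 2], [3, 2, 0, 1, 0, 2, 3],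
   [3, 2, 0, 1, 4, 1, 0], [3, 2, 0, 2, 3, 2, 0], [3, 2, 0, 2, 3, 5, 3], [3, 2, 3, 5, 4, 1, 4],
   [3, 2, 3, 5, 4, 5, 3], [3, 5, 3, 2, 0, 2, 3], [3, 5, 3, 2, 3, 5, 4], [3, 5, 4, 1, 4, 5, 3],
   [3, 5, 4, 1, 4, 5, 4], [3, 5, 4, 5, 3, 2, 0], [3, 5, 4, 5, 3, 2, 3], [4, 1, 0, 1, 4, 5, 3],
   [4, 1, 0, 1, 4, 5, 4], [4, 1, 0, 2, 0, 1, 0], [4, 1, 0, 2, 0, 1, 4], [4, 1, 4, 5, 3, 5, 4],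
   [4, 1, 4, 5, 4, 1, 0], [4, 5, 3, 2, 0, 2, 3], [4, 5, 3, 2, 3, 5, 4], [4, 5, 3, 5, 4, 1, 4],
   [4, 5, 3, 5, 4, 5, 3], [4, 5, 4, 1, 0, 1, 4], [4, 5, 4, 1, 0, 2, 0], [5, 3, 2, 0, 2, 3, 2],
   [5, 3, 2, 0, 2, 3, 5], [5, 3, 2, 3, 5, 4, 1], [5, 3, 2, 3, 5, 4, 5], [5, 3, 5, 4, 1, 4, 5],
   [5, 3, 5, 4, 5, 3, 2], [5, 4, 1, 0, 1, 4, 5], [5, 4, 1, 0, 2, 0, 1], [5, 4, 1, 4, 5, 3, 5],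
   [5, 4, 1, 4, 5, 4, 1], [5, 4, 5, 3, 2, 0, 2], [5, 4, 5, 3, 2, 3, 5]]

lemma muIter_succ (n : ℕ) : muIter (n + 1) = bind3 mu (muIter n) :=
  Function.iterate_succ_apply' _ n _

lemma muIter_succ_eq_sigma_rho (n : ℕ) :
    muIter (n + 1) = (muIter n).map sigma6 ++ muIter n ++ (muIter n).map rho6 := by
  induction n with
  | zero => decide
  | succ n ih =>
    have hsigma : ∀ a j, mu (sigma6 a) j = sigma6 (mu a j) := by decide
    have hrho : ∀ a j, mu (rho6 a) j = rho6 (mu a j) := by decide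
    rw [muIter_succ] at ih ⊢
    rw [muIter_succ, ← bind3_map _ _ _ _ hsigma, ← bind3_map _ _ _ _ hrho, ← bind3_append,
      ← bind3_append, ← ih]

lemma K_succ (n : ℕ) : K (n + 1) = bind3 tau (muIter n) := by
  induction n with
  | zero => decide
  | succ n ih =>
    have hsigma : ∀ a j, tau (sigma6 a) j = sigmaM (tau a j) := by decide
    have hrho : ∀ a j, tau (rho6 a) j = rhoM (tau a j) := by decide
    rw [K, Function.iterate_succ_apply', ← K, ih, muIter_succ_eq_sigma_rho, bind3_append,
      bind3_append, bind3_map _ _ _ _ hsigma, bind3_map _ _ _ _ hrho, phi]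

lemma muIter_windows_and_avoids74' (n : ℕ) :
    WindowsIn muWindows (muIter n) ∧ Avoids74' (muIter n) := by
  induction n with
  | zero =>
    refine ⟨fun k => ?_, fun s ℓ p hp hlen _ => ?_⟩
    · rcases k with _ | k <;> simp [muIter, muWindows]
    · have : (muIter 0).length = 1 := rfl
      omega
  | succ n ih =>
    obtain ⟨hw, hv⟩ := ih
    have closed : ∀ f ∈ muWindows, ∀ j < 3,
        ((bind3 mu (f.take 3)).drop j).take 7 ∈ muWindows := by decide
    have sync : Synchronizing mu muWindows 2 4 := by unfold Synchronizing; decide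
    have short : ShortRepetitionFree mu muWindows 4 := by unfold ShortRepetitionFree; decide
    have inj0 : ∀ y y' : Fin 6, mu y 0 = mu y' 0 → y = y' := by decide
    have inj2 : ∀ x x' : Fin 6, mu x 2 = mu x' 2 → x = x' := by decide
    rw [muIter_succ]
    exact ⟨hw.bind3 closed, hv.bind3 hw.isChain (by decide) (by decide)
      (fun x x' _ _ _ => inj2 x x') (fun _ y y' _ _ => inj0 y y')
      (fun i i' hi hi' => sync.mod_eq (by norm_num) (by norm_num) hw hi hi')
      (fun s ℓ p hp hℓ hlen hP => short.le (by norm_num) hw hp hℓ hlen hP)⟩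

lemma avoids74'_bind3_tau_muIter (n : ℕ) : Avoids74' (bind3 tau (muIter n)) := by
  obtain ⟨hw, hv⟩ := muIter_windows_and_avoids74' n
  have sync : Synchronizing tau muWindows 4 9 := by unfold Synchronizing; decide
  have short : ShortRepetitionFree tau muWindows 9 := by unfold ShortRepetitionFree; decide
  have hleft : ∀ x x' y, Adjacent muWindows x y → Adjacent muWindows x' y →
      tau x 2 = tau x' 2 → x = x' := by unfold Adjacent; decide
  have hright : ∀ x y y', Adjacent muWindows x y → Adjacent muWindows x y' →
      tau y 0 = tau y' 0 → y = y' := by unfold Adjacent; decide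
  exact hv.bind3 hw.isChain (by decide) (by decide) hleft hright
    (fun i i' hi hi' => sync.mod_eq (by norm_num) (by norm_num) hw hi hi')
    (fun s ℓ p hp hℓ hlen hP => short.le le_rfl hw hp hℓ hlen hP)

lemma avoids74_of_avoids74' {w : List (Fin 3)} (h : Avoids74' w) : Avoids74 w := by
  rintro x p ⟨a, b, rfl⟩ - ⟨⟨hp, hper⟩, -⟩
  refine h a.length x.length p hp (by simp) fun i hi hip => ?_
  obtain ⟨d, rfl⟩ : ∃ d, i = a.length + d := ⟨i - a.length, by omega⟩
  have hx : ∀ e, e < x.length → (a ++ x ++ b)[a.length + e]! = x[e]! := fun e he => by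
    rw [getElem!_pos _ _ (by simp; omega), getElem!_pos x e he]
    simp [getElem_append_right, getElem_append_left he]
  rw [add_assoc, hx d (by omega), hx (d + p) (by omega)]
  exact hper d (by omega)

theorem stmt6 : ∀ n : ℕ, 1 ≤ n → Avoids74 (K n) := by
  intro n hn
  obtain ⟨n, rfl⟩ := Nat.exists_eq_add_of_le' hn
  rw [K_succ]
  exact avoids74_of_avoids74' (avoids74'_bind3_tau_muIter n)
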